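/- arXiv:2303.06016 — 3 statements merged into one kernel-verified Lean document; each statement's English description precedes it below -/
import Mathlib

section
/- (Theorem 1, part 1) In the savings-centered Probe model, the partial derivative of P(B) with respect to the user's positive bias coefficient α_u⁺ equals (1/2)·P(B)·P(i_m)·u₁(c_B)·ln(p), which is strictly negative; hence P(B) is strictly decreasing in α_u⁺. -/
/-- Theorem 1, part 1: in the savings-centered Probe model, the derivative of
`P(B)` with respect to the user's positive bias coefficient `α_u⁺` equals
`(1/2)·P(B)·P(i_m)·u₁(c_B)·ln p < 0`; hence `P(B)` is strictly decreasing
in `α_u⁺`. -/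
theorem probe_PB_decreasing_in_alpha_plus
    (p cB cm c1 βp aup aip aum aim ξm ξB : ℝ)
    (hp : p ∈ Set.Ioo (0 : ℝ) 1)
    (h1 : 0 < cB - cm) (h2 : 0 < cm + c1 - cB)
    (hβ : βp ∈ Set.Ioo (0 : ℝ) 1)
    (haup : 0 < aup) (haip : 0 < aip) (haum : 0 < aum) (haim : 0 < aim)
    (u1m : ℝ) (hu1m : u1m = (1 - p) ^ ((aum + aim) / 2) * (cB - cm) ^ βp)
    (u1B : ℝ → ℝ)
    (hu1B : u1B = fun a : ℝ => p ^ ((a + aip) / 2) * (cm + c1 - cB) ^ βp)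
    (PB : ℝ → ℝ)
    (hPB : PB = fun a : ℝ =>
      Real.exp (u1B a + ξB) / (Real.exp (u1m + ξm) + Real.exp (u1B a + ξB))) :
    HasDerivAt PB
      ((1 / 2) * PB aup * (1 - PB aup) * u1B aup * Real.log p) aup ∧
    (1 / 2) * PB aup * (1 - PB aup) * u1B aup * Real.log p < 0 ∧
    StrictAnti PB := by
  obtain ⟨hp0, hp1⟩ := hp
  set L := Real.log p with hLdef
  have hLneg : L < 0 := Real.log_neg hp0 hp1
  have hK : 0 < (cm + c1 - cB) ^ βp := Real.rpow_pos_of_pos h2 βp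
  have hu1Bpos : ∀ a, 0 < u1B a := by
    intro a; rw [hu1B]; exact mul_pos (Real.rpow_pos_of_pos hp0 _) hK
  have hderiv_u1B : ∀ a, HasDerivAt u1B (u1B a * L / 2) a := by
    intro a
    have h1' : HasDerivAt (fun x : ℝ => ((x + aip) / 2) * L) (L / 2) a := by
      rw [show L / 2 = 1 / 2 * L from by ring]
      exact (((hasDerivAt_id a).add_const aip).div_const 2).mul_const L
    have h2' : HasDerivAt (fun x : ℝ => Real.exp (((x + aip) / 2) * L))
        (Real.exp (((a + aip) / 2) * L) * (L / 2)) a := h1'.exp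
    have h3' := h2'.mul_const ((cm + c1 - cB) ^ βp)
    have heq : u1B = fun x : ℝ =>
        Real.exp (((x + aip) / 2) * L) * (cm + c1 - cB) ^ βp := by
      rw [hu1B]; funext x
      rw [hLdef, Real.rpow_def_of_pos hp0, mul_comm (Real.log p)]
    rw [heq]
    refine h3'.congr_deriv ?_
    beta_reduce
    ring
  have hPBmem : ∀ a, 0 < PB a ∧ PB a < 1 := by
    intro a
    rw [hPB]
    constructor
    · exact div_pos (Real.exp_pos _) (by positivity)
    · rw [div_lt_one (by positivity)]
      have := Real.exp_pos (u1m + ξm)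
      linarith
  have hderivPB : ∀ a, HasDerivAt PB ((1 / 2) * PB a * (1 - PB a) * u1B a * L) a := by
    intro a
    have hg : HasDerivAt (fun x => u1B x + ξB) (u1B a * L / 2) a :=
      (hderiv_u1B a).add_const ξB
    have hN : HasDerivAt (fun x => Real.exp (u1B x + ξB))
        (Real.exp (u1B a + ξB) * (u1B a * L / 2)) a := hg.exp
    have hD : HasDerivAt (fun x => Real.exp (u1m + ξm) + Real.exp (u1B x + ξB))
        (Real.exp (u1B a + ξB) * (u1B a * L / 2)) a := hN.const_add _
    have hDne : Real.exp (u1m + ξm) + Real.exp (u1B a + ξB) ≠ 0 := by positivity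
    have h := hN.div hD hDne
    rw [hPB]
    refine h.congr_deriv ?_
    beta_reduce
    field_simp
  have hneg : ∀ a, (1 / 2) * PB a * (1 - PB a) * u1B a * L < 0 := by
    intro a
    obtain ⟨h01, h02⟩ := hPBmem a
    have hpos : 0 < (1 / 2) * PB a * (1 - PB a) * u1B a :=
      mul_pos (mul_pos (mul_pos (by norm_num : (0:ℝ) < 1 / 2) h01)
        (by linarith : (0:ℝ) < 1 - PB a)) (hu1Bpos a)
    exact mul_neg_of_pos_of_neg hpos hLneg
  refine ⟨hderivPB aup, hneg aup, ?_⟩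
  apply strictAnti_of_deriv_neg
  intro x
  rw [(hderivPB x).deriv]
  exact hneg x
end

section
/- (Theorem 1, part 2) In the savings-centered Probe model, the partial derivative of P(B) with respect to α_u⁻ equals -(1/2)·P(B)·P(i_m)·u₁(c_m)·ln(1-p), which is strictly positive; hence P(B) is strictly increasing in α_u⁻. -/
lemma probe_aux (p cB cm aim βp ξm u1B ξB : ℝ)
    (hp : p ∈ Set.Ioo (0 : ℝ) 1) (h1 : 0 < cB - cm)
    (u1m : ℝ → ℝ)
    (hu1m : u1m = fun a : ℝ => (1 - p) ^ ((a + aim) / 2) * (cB - cm) ^ βp)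
    (PB : ℝ → ℝ)
    (hPB : PB = fun a : ℝ =>
      Real.exp (u1B + ξB) / (Real.exp (u1m a + ξm) + Real.exp (u1B + ξB)))
    (a : ℝ) :
    HasDerivAt PB (-((1 / 2) * PB a * (1 - PB a) * u1m a * Real.log (1 - p))) a ∧
    0 < -((1 / 2) * PB a * (1 - PB a) * u1m a * Real.log (1 - p)) := by
  obtain ⟨hp0, hp1⟩ := hp
  have h1p : (0:ℝ) < 1 - p := by linarith
  have hK : (0:ℝ) < (cB - cm) ^ βp := Real.rpow_pos_of_pos h1 _
  have hlog : Real.log (1 - p) < 0 := Real.log_neg h1p (by linarith)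
  -- rewrite u1m via exp
  have hu1m' : u1m = fun a : ℝ =>
      Real.exp (Real.log (1 - p) * ((a + aim) / 2)) * (cB - cm) ^ βp := by
    rw [hu1m]; funext x
    rw [Real.rpow_def_of_pos h1p]
  have hu1mpos : ∀ x, 0 < u1m x := by
    intro x; rw [hu1m']; positivity
  -- derivative of u1m
  have hder_u1m : ∀ x, HasDerivAt u1m (u1m x * (Real.log (1 - p) / 2)) x := by
    intro x
    have inner : HasDerivAt (fun y : ℝ => Real.log (1 - p) * ((y + aim) / 2))
        (Real.log (1 - p) * (1 / 2)) x := by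
      have := (((hasDerivAt_id x).add_const aim).div_const 2).const_mul (Real.log (1 - p))
      simpa using this
    have hexp := inner.exp
    have := hexp.mul_const ((cB - cm) ^ βp)
    rw [hu1m']
    refine this.congr_deriv ?_
    simp only [hu1m']
    ring
  -- derivative of f = exp (u1m x + ξm)
  set C := Real.exp (u1B + ξB) with hC
  have hCpos : 0 < C := Real.exp_pos _
  have hf : ∀ x, HasDerivAt (fun y => Real.exp (u1m y + ξm))
      (Real.exp (u1m x + ξm) * (u1m x * (Real.log (1 - p) / 2))) x := by
    intro x
    exact ((hder_u1m x).add_const ξm).exp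
  have hfpos : ∀ x, 0 < Real.exp (u1m x + ξm) := fun x => Real.exp_pos _
  have hden : ∀ x, Real.exp (u1m x + ξm) + C ≠ 0 := by
    intro x; positivity
  have hPBder : HasDerivAt PB
      (-((1 / 2) * PB a * (1 - PB a) * u1m a * Real.log (1 - p))) a := by
    rw [hPB]
    have hq := (hasDerivAt_const a C).div ((hf a).add_const C) (hden a)
    refine hq.congr_deriv ?_
    simp only
    have h := hden a
    field_simp
    ring
  refine ⟨hPBder, ?_⟩
  have hPBa : PB a = C / (Real.exp (u1m a + ξm) + C) := by rw [hPB]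
  have h0 : 0 < PB a := by rw [hPBa]; positivity
  have h1' : PB a < 1 := by
    rw [hPBa, div_lt_one (by positivity)]
    linarith [hfpos a]
  have hu := hu1mpos a
  have A : 0 < 1 / 2 * PB a * (1 - PB a) * u1m a :=
    mul_pos (mul_pos (mul_pos (by norm_num) h0) (by linarith)) hu
  have B := mul_pos A (neg_pos.mpr hlog)
  linarith [B]

/-- Theorem 1, part 2: in the savings-centered Probe model, the derivative of
`P(B)` with respect to `α_u⁻` equals
`-(1/2)·P(B)·P(i_m)·u₁(c_m)·ln(1-p) > 0`; hence `P(B)` is strictly increasing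
in `α_u⁻`. -/
theorem probe_PB_increasing_in_alpha_minus
    (p cB cm c1 βp aup aip aum aim ξm ξB : ℝ)
    (hp : p ∈ Set.Ioo (0 : ℝ) 1)
    (h1 : 0 < cB - cm) (h2 : 0 < cm + c1 - cB)
    (hβ : βp ∈ Set.Ioo (0 : ℝ) 1)
    (haup : 0 < aup) (haip : 0 < aip) (haum : 0 < aum) (haim : 0 < aim)
    (u1m : ℝ → ℝ)
    (hu1m : u1m = fun a : ℝ => (1 - p) ^ ((a + aim) / 2) * (cB - cm) ^ βp)
    (u1B : ℝ) (hu1B : u1B = p ^ ((aup + aip) / 2) * (cm + c1 - cB) ^ βp)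
    (PB : ℝ → ℝ)
    (hPB : PB = fun a : ℝ =>
      Real.exp (u1B + ξB) / (Real.exp (u1m a + ξm) + Real.exp (u1B + ξB))) :
    HasDerivAt PB
      (-((1 / 2) * PB aum * (1 - PB aum) * u1m aum * Real.log (1 - p))) aum ∧
    0 < -((1 / 2) * PB aum * (1 - PB aum) * u1m aum * Real.log (1 - p)) ∧
    StrictMono PB := by
  obtain ⟨hd, hpos⟩ := probe_aux p cB cm aim βp ξm u1B ξB hp h1 u1m hu1m PB hPB aum
  refine ⟨hd, hpos, ?_⟩
  apply strictMono_of_deriv_pos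
  intro x
  obtain ⟨hd', hpos'⟩ := probe_aux p cB cm aim βp ξm u1B ξB hp h1 u1m hu1m PB hPB x
  rw [hd'.deriv]
  exact hpos'
end

section
/- (Theorem 2) In the savings-centered Probe model, the partial derivative of P(B) with respect to the correlation probability p equals P(B)·P(i_m)·[ ((α_u⁺+α_i⁺)/2)·u₁(c_B)·p^{-1} + ((α_u⁻+α_i⁻)/2)·u₁(c_m)·(1-p)^{-1} ], which is strictly positive; hence P(B) is strictly increasing in p. -/
theorem probe_aux_s11
    (cB cm c1 βp aup aip aum aim ξm ξB : ℝ)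
    (h1 : 0 < cB - cm) (h2 : 0 < cm + c1 - cB)
    (haup : 0 < aup) (haip : 0 < aip) (haum : 0 < aum) (haim : 0 < aim)
    (p : ℝ) (hp : p ∈ Set.Ioo (0 : ℝ) 1) :
    HasDerivAt (fun p : ℝ =>
      Real.exp ((fun p : ℝ => p ^ ((aup + aip) / 2) * (cm + c1 - cB) ^ βp) p + ξB) /
        (Real.exp ((fun p : ℝ => (1 - p) ^ ((aum + aim) / 2) * (cB - cm) ^ βp) p + ξm) +
          Real.exp ((fun p : ℝ => p ^ ((aup + aip) / 2) * (cm + c1 - cB) ^ βp) p + ξB)))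
      (Real.exp (p ^ ((aup + aip) / 2) * (cm + c1 - cB) ^ βp + ξB) /
        (Real.exp ((1 - p) ^ ((aum + aim) / 2) * (cB - cm) ^ βp + ξm) +
          Real.exp (p ^ ((aup + aip) / 2) * (cm + c1 - cB) ^ βp + ξB)) *
       (1 - Real.exp (p ^ ((aup + aip) / 2) * (cm + c1 - cB) ^ βp + ξB) /
        (Real.exp ((1 - p) ^ ((aum + aim) / 2) * (cB - cm) ^ βp + ξm) +
          Real.exp (p ^ ((aup + aip) / 2) * (cm + c1 - cB) ^ βp + ξB))) *
       (((aup + aip) / 2) * (p ^ ((aup + aip) / 2) * (cm + c1 - cB) ^ βp) * p⁻¹ +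
        ((aum + aim) / 2) * ((1 - p) ^ ((aum + aim) / 2) * (cB - cm) ^ βp) * (1 - p)⁻¹)) p ∧
    0 < Real.exp (p ^ ((aup + aip) / 2) * (cm + c1 - cB) ^ βp + ξB) /
        (Real.exp ((1 - p) ^ ((aum + aim) / 2) * (cB - cm) ^ βp + ξm) +
          Real.exp (p ^ ((aup + aip) / 2) * (cm + c1 - cB) ^ βp + ξB)) *
       (1 - Real.exp (p ^ ((aup + aip) / 2) * (cm + c1 - cB) ^ βp + ξB) /
        (Real.exp ((1 - p) ^ ((aum + aim) / 2) * (cB - cm) ^ βp + ξm) +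
          Real.exp (p ^ ((aup + aip) / 2) * (cm + c1 - cB) ^ βp + ξB))) *
       (((aup + aip) / 2) * (p ^ ((aup + aip) / 2) * (cm + c1 - cB) ^ βp) * p⁻¹ +
        ((aum + aim) / 2) * ((1 - p) ^ ((aum + aim) / 2) * (cB - cm) ^ βp) * (1 - p)⁻¹) := by
  obtain ⟨hp0, hp1⟩ := hp
  have hq0 : (0:ℝ) < 1 - p := by linarith
  set a := (aup + aip) / 2 with ha_def
  set b := (aum + aim) / 2 with hb_def
  have ha : 0 < a := by positivity
  have hb : 0 < b := by positivity
  set K2 := (cm + c1 - cB) ^ βp with hK2_def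
  set K1 := (cB - cm) ^ βp with hK1_def
  have hK2 : 0 < K2 := Real.rpow_pos_of_pos h2 _
  have hK1 : 0 < K1 := Real.rpow_pos_of_pos h1 _
  set eB := Real.exp (p ^ a * K2 + ξB) with heB_def
  set eM := Real.exp ((1 - p) ^ b * K1 + ξm) with heM_def
  have heB : 0 < eB := Real.exp_pos _
  have heM : 0 < eM := Real.exp_pos _
  have hS : 0 < eM + eB := by linarith
  -- derivatives of the inner functions
  have hdB : HasDerivAt (fun q : ℝ => q ^ a * K2) (a * p ^ (a - 1) * K2) p :=
    (Real.hasDerivAt_rpow_const (Or.inl hp0.ne')).mul_const _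
  have hd1 : HasDerivAt (fun q : ℝ => 1 - q) (-1) p := by
    simpa using (hasDerivAt_id p).const_sub (1:ℝ)
  have hdM : HasDerivAt (fun q : ℝ => (1 - q) ^ b * K1)
      ((b * (1 - p) ^ (b - 1)) * (-1) * K1) p := by
    have h := (Real.hasDerivAt_rpow_const (p := b) (Or.inl hq0.ne')).comp p hd1
    exact h.mul_const _
  have hdeB : HasDerivAt (fun q : ℝ => Real.exp (q ^ a * K2 + ξB))
      (eB * (a * p ^ (a-1) * K2)) p := by
    simpa [heB_def, mul_comm] using (hdB.add_const ξB).exp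
  have hdeM : HasDerivAt (fun q : ℝ => Real.exp ((1 - q) ^ b * K1 + ξm))
      (eM * ((b * (1 - p) ^ (b - 1)) * (-1) * K1)) p := by
    simpa [heM_def, mul_comm] using (hdM.add_const ξm).exp
  have hdenom : HasDerivAt (fun q : ℝ => Real.exp ((1 - q) ^ b * K1 + ξm) +
      Real.exp (q ^ a * K2 + ξB))
      (eM * ((b * (1 - p) ^ (b - 1)) * (-1) * K1) + eB * (a * p ^ (a-1) * K2)) p :=
    hdeM.add hdeB
  have hdiv := hdeB.div hdenom hS.ne'
  have hpa : p ^ (a - 1) = p ^ a / p := by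
    rw [Real.rpow_sub hp0, Real.rpow_one]
  have hqb : (1 - p) ^ (b - 1) = (1 - p) ^ b / (1 - p) := by
    rw [Real.rpow_sub hq0, Real.rpow_one]
  constructor
  · refine hdiv.congr_deriv ?_
    rw [hpa, hqb]
    field_simp
    ring
  · have hfrac : eB / (eM + eB) < 1 := by
      rw [div_lt_one hS]; linarith
    have h3 : 0 < a * (p ^ a * K2) * p⁻¹ + b * ((1 - p) ^ b * K1) * (1 - p)⁻¹ := by
      have := Real.rpow_pos_of_pos hp0 a
      have := Real.rpow_pos_of_pos hq0 b
      positivity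
    have h4 : 0 < eB / (eM + eB) := by positivity
    have h5 : 0 < 1 - eB / (eM + eB) := by linarith
    positivity

/-- Theorem 2: in the savings-centered Probe model, the derivative of `P(B)`
with respect to the correlation probability `p` equals
`P(B)·P(i_m)·[((α_u⁺+α_i⁺)/2)·u₁(c_B)·p⁻¹ + ((α_u⁻+α_i⁻)/2)·u₁(c_m)·(1-p)⁻¹]`,
which is strictly positive; hence `P(B)` is strictly increasing in `p` on
`(0,1)`. -/
theorem probe_PB_increasing_in_p
    (p0 cB cm c1 βp aup aip aum aim ξm ξB : ℝ)
    (hp : p0 ∈ Set.Ioo (0 : ℝ) 1)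
    (h1 : 0 < cB - cm) (h2 : 0 < cm + c1 - cB)
    (hβ : βp ∈ Set.Ioo (0 : ℝ) 1)
    (haup : 0 < aup) (haip : 0 < aip) (haum : 0 < aum) (haim : 0 < aim)
    (u1m : ℝ → ℝ)
    (hu1m : u1m = fun p : ℝ => (1 - p) ^ ((aum + aim) / 2) * (cB - cm) ^ βp)
    (u1B : ℝ → ℝ)
    (hu1B : u1B = fun p : ℝ => p ^ ((aup + aip) / 2) * (cm + c1 - cB) ^ βp)
    (PB : ℝ → ℝ)
    (hPB : PB = fun p : ℝ =>
      Real.exp (u1B p + ξB) / (Real.exp (u1m p + ξm) + Real.exp (u1B p + ξB))) :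
    HasDerivAt PB
      (PB p0 * (1 - PB p0) *
        (((aup + aip) / 2) * u1B p0 * p0⁻¹ +
          ((aum + aim) / 2) * u1m p0 * (1 - p0)⁻¹)) p0 ∧
    0 < PB p0 * (1 - PB p0) *
        (((aup + aip) / 2) * u1B p0 * p0⁻¹ +
          ((aum + aim) / 2) * u1m p0 * (1 - p0)⁻¹) ∧
    StrictMonoOn PB (Set.Ioo (0 : ℝ) 1) := by
  subst hu1m hu1B hPB
  have key := fun (p : ℝ) (hp : p ∈ Set.Ioo (0:ℝ) 1) =>
    probe_aux_s11 cB cm c1 βp aup aip aum aim ξm ξB h1 h2 haup haip haum haim p hp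
  refine ⟨(key p0 hp).1, (key p0 hp).2, ?_⟩
  apply strictMonoOn_of_deriv_pos (convex_Ioo 0 1)
  · intro x hx
    exact ((key x hx).1.differentiableAt.continuousAt).continuousWithinAt
  · intro x hx
    rw [interior_Ioo] at hx
    rw [(key x hx).1.deriv]
    exact (key x hx).2
end
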